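/- If a graph G has a restricted frame representation and v is a vertex of G, then the graph obtained from G by adding a twin of v (a new vertex u, non-adjacent to v, whose neighborhood is exactly N(v)) is also a restricted frame graph. -/

import Mathlib

/-! ## Frames and restricted frame graphs -/

/-- An axis-parallel box in `ℝ²`, i.e. a product `[x1,x2] × [y1,y2]` of two closed
nondegenerate intervals. -/
structure Box : Type where
  x1 : ℝ
  x2 : ℝ
  y1 : ℝ
  y2 : ℝ
  hx : x1 < x2
  hy : y1 < y2

namespace Box

/-- The region bounded by the frame of a box: the closed box itself. -/
def region (B : Box) : Set (ℝ × ℝ) :=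
  {p : ℝ × ℝ | B.x1 ≤ p.1 ∧ p.1 ≤ B.x2 ∧ B.y1 ≤ p.2 ∧ p.2 ≤ B.y2}

/-- The frame of a box: the topological boundary of the closed box. -/
def frame (B : Box) : Set (ℝ × ℝ) :=
  {p : ℝ × ℝ | p ∈ B.region ∧ (p.1 = B.x1 ∨ p.1 = B.x2 ∨ p.2 = B.y1 ∨ p.2 = B.y2)}

/-- The left side `{x1} × [y1,y2]` of a frame. -/
def leftSide (B : Box) : Set (ℝ × ℝ) :=
  {p : ℝ × ℝ | p.1 = B.x1 ∧ B.y1 ≤ p.2 ∧ p.2 ≤ B.y2}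

/-- The right side `{x2} × [y1,y2]` of a frame. -/
def rightSide (B : Box) : Set (ℝ × ℝ) :=
  {p : ℝ × ℝ | p.1 = B.x2 ∧ B.y1 ≤ p.2 ∧ p.2 ≤ B.y2}

/-- The top side `[x1,x2] × {y2}` of a frame. -/
def topSide (B : Box) : Set (ℝ × ℝ) :=
  {p : ℝ × ℝ | p.2 = B.y2 ∧ B.x1 ≤ p.1 ∧ p.1 ≤ B.x2}

/-- The bottom side `[x1,x2] × {y1}` of a frame. -/
def bottomSide (B : Box) : Set (ℝ × ℝ) :=
  {p : ℝ × ℝ | p.2 = B.y1 ∧ B.x1 ≤ p.1 ∧ p.1 ≤ B.x2}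

/-- The four corners of a frame. -/
def corners (B : Box) : Set (ℝ × ℝ) :=
  {(B.x1, B.y1), (B.x1, B.y2), (B.x2, B.y1), (B.x2, B.y2)}

/-- `Box.Inside inner outer` : the frame of `outer` contains the frame of `inner`,
i.e. the two frames are disjoint and the frame of `inner` is contained in the region
bounded by the frame of `outer`. -/
def Inside (inner outer : Box) : Prop :=
  inner.frame ∩ outer.frame = ∅ ∧ inner.frame ⊆ outer.region

/-- `Box.Outside B outer` : the frames are disjoint and `B` is not inside `outer`. -/
def Outside (B outer : Box) : Prop :=
  B.frame ∩ outer.frame = ∅ ∧ ¬ Inside B outer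

end Box

/-- A family of frames `(F v)` is a representation of the graph `G` as a restricted
frame graph: distinct vertices are adjacent iff their frames intersect, and the four
restrictions on the representation hold. -/
structure IsFrameRepresentation {V : Type} (G : SimpleGraph V) (F : V → Box) : Prop where
  /-- Distinct vertices are adjacent iff their frames intersect. -/
  adj_iff : ∀ u v : V, u ≠ v → (G.Adj u v ↔ ((F u).frame ∩ (F v).frame).Nonempty)
  /-- (1) Corners of a frame do not coincide with any point of another frame. -/
  corner_free : ∀ u v : V, u ≠ v → (F u).corners ∩ (F v).frame = ∅
  /-- (2) The left side of a frame does not intersect any other frame. -/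
  left_free : ∀ u v : V, u ≠ v → (F u).leftSide ∩ (F v).frame = ∅
  /-- (3) If the right side of a frame intersects a second frame, this right side
  intersects both the top and the bottom side of that second frame. -/
  right_cross : ∀ u v : V, u ≠ v →
    ((F u).rightSide ∩ (F v).frame).Nonempty →
    ((F u).rightSide ∩ (F v).topSide).Nonempty ∧
      ((F u).rightSide ∩ (F v).bottomSide).Nonempty
  /-- (4) If two frames intersect, no third frame is entirely contained in the
  intersection of the regions bounded by the two frames. -/
  not_nested : ∀ u v w : V, u ≠ v → w ≠ u → w ≠ v →
    ((F u).frame ∩ (F v).frame).Nonempty →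
    ¬ ((F w).frame ⊆ (F u).region ∩ (F v).region)

/-- A graph is a restricted frame graph if it admits a frame representation. -/
def IsRestrictedFrameGraph {V : Type} (G : SimpleGraph V) : Prop :=
  ∃ F : V → Box, IsFrameRepresentation G F

/-! ## Basic graph notions -/

/-- The closed neighborhood `N[u] = {u} ∪ N(u)`. -/
def closedNbhd {V : Type} (G : SimpleGraph V) (u : V) : Set V :=
  insert u (G.neighborSet u)

/-- `G` has a full star-cutset: for some vertex `u` the removal of `N[u]`
disconnects `G`. -/
def HasFullStarCutset {V : Type} (G : SimpleGraph V) : Prop :=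
  ∃ u : V, ¬ (G.induce ((closedNbhd G u)ᶜ)).Preconnected

/-- `v` is a cut-vertex of `G`: its removal disconnects `G`. -/
def IsCutVertex {V : Type} (G : SimpleGraph V) (v : V) : Prop :=
  ¬ (G.induce {u : V | u ≠ v}).Preconnected

/-- `G` is a path graph: its vertices can be enumerated `0, …, n-1` so that two
vertices are adjacent iff they are consecutive. -/
def IsPathGraph {V : Type} (G : SimpleGraph V) : Prop :=
  ∃ (n : ℕ) (e : V ≃ Fin n), ∀ u v : V,
    G.Adj u v ↔ ((e u : ℕ) + 1 = (e v : ℕ) ∨ (e v : ℕ) + 1 = (e u : ℕ))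

/-- `G` is a cycle graph (on at least 3 vertices). -/
def IsCycleGraphOn {V : Type} (G : SimpleGraph V) : Prop :=
  ∃ n : ℕ, 3 ≤ n ∧ ∃ e : V ≃ Fin n, ∀ u v : V,
    G.Adj u v ↔ (((e u : ℕ) + 1) % n = (e v : ℕ) ∨ ((e v : ℕ) + 1) % n = (e u : ℕ))

/-- `x` is a leaf of `T`: it has exactly one neighbor. -/
def IsLeaf {V : Type} (T : SimpleGraph V) (x : V) : Prop :=
  (T.neighborSet x).ncard = 1

/-- `G` is a chandelier with pivot `v`: `G - v` is a tree `T` and `v` is adjacent to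
exactly the leaves of `T`. -/
def IsChandelierWithPivot {V : Type} (G : SimpleGraph V) (v : V) : Prop :=
  (G.induce {u : V | u ≠ v}).IsTree ∧
    ∀ u : ↥{u : V | u ≠ v}, (G.Adj v u.val ↔ IsLeaf (G.induce {u : V | u ≠ v}) u)

/-- `G` is a chandelier. -/
def IsChandelier {V : Type} (G : SimpleGraph V) : Prop :=
  ∃ v : V, IsChandelierWithPivot G v

/-- `G` is a luxury chandelier: a chandelier (with pivot `v` and tree `T = G - v`)
such that the neighbor in `T` of each leaf of `T` has degree 2 in `T`. -/
def IsLuxuryChandelier {V : Type} (G : SimpleGraph V) : Prop :=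
  ∃ v : V, IsChandelierWithPivot G v ∧
    ∀ x y : ↥{u : V | u ≠ v}, (G.induce {u : V | u ≠ v}).Adj x y →
      IsLeaf (G.induce {u : V | u ≠ v}) x →
      ((G.induce {u : V | u ≠ v}).neighborSet y).ncard = 2

/-! ## Multigraphs and subdivisions -/

/-- A loopless multigraph on vertex set `V`: a symmetric multiplicity function. -/
structure Multigraph (V : Type) where
  m : V → V → ℕ
  symm : ∀ u v : V, m u v = m v u
  loopless : ∀ v : V, m v v = 0

/-- The multigraph associated with a simple graph (each edge has multiplicity 1). -/
noncomputable def SimpleGraph.toMultigraph {V : Type} (G : SimpleGraph V) : Multigraph V where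
  m u v := @ite ℕ (G.Adj u v) (Classical.dec _) 1 0
  symm u v := by
    beta_reduce
    by_cases h : G.Adj u v
    · rw [if_pos h, if_pos (G.adj_symm h)]
    · rw [if_neg h, if_neg (fun h' => h (G.adj_symm h'))]
  loopless v := by
    beta_reduce
    rw [if_neg (G.irrefl (v := v))]

/-- The interior (set of internal vertices) of a walk. -/
def walkInterior {V : Type} {G : SimpleGraph V} {a b : V} (p : G.Walk a b) : Set V :=
  {w : V | w ∈ p.support ∧ w ≠ a ∧ w ≠ b}

/-- A witness that the simple graph `H` is a `≥k`-subdivision of the multigraph `G`: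
each edge of `G` (counted with multiplicity) is replaced by a path with at least
`k+1` edges between (the images of) its endpoints, these paths being internally
disjoint from each other and from the branch vertices, and covering all of `H`. -/
structure MultiSubdivision {V W : Type} (G : Multigraph V) (H : SimpleGraph W) (k : ℕ) where
  /-- the embedding of branch vertices -/
  f : V ↪ W
  /-- the path replacing the `i`-th parallel edge between `u` and `v` -/
  path : ∀ u v : V, Fin (G.m u v) → H.Walk (f u) (f v)
  path_symm : ∀ (u v : V) (i : Fin (G.m u v)),
    path v u (Fin.cast (G.symm u v) i) = (path u v i).reverse
  path_ne : ∀ (u v : V) (i i' : Fin (G.m u v)), (i : ℕ) ≠ (i' : ℕ) →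
    path u v i ≠ path u v i'
  isPath : ∀ (u v : V) (i : Fin (G.m u v)), (path u v i).IsPath
  length_le : ∀ (u v : V) (i : Fin (G.m u v)), k + 1 ≤ (path u v i).length
  /-- the paths are internally disjoint from the branch vertices -/
  interior_avoid : ∀ (u v : V) (i : Fin (G.m u v)) (x : V),
    f x ∉ walkInterior (path u v i)
  /-- distinct paths are pairwise internally disjoint -/
  interior_disjoint : ∀ (u v : V) (i : Fin (G.m u v)) (u' v' : V) (i' : Fin (G.m u' v')),
    (walkInterior (path u v i) ∩ walkInterior (path u' v' i')).Nonempty →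
    (u = u' ∧ v = v' ∧ (i : ℕ) = (i' : ℕ)) ∨ (u = v' ∧ v = u' ∧ (i : ℕ) = (i' : ℕ))
  /-- every vertex of `H` is a branch vertex or an internal vertex of a path -/
  vertex_cover : ∀ w : W, (∃ x : V, f x = w) ∨
    ∃ (u v : V) (i : Fin (G.m u v)), w ∈ walkInterior (path u v i)
  /-- every edge of `H` lies on one of the paths -/
  edge_cover : ∀ e ∈ H.edgeSet, ∃ (u v : V) (i : Fin (G.m u v)), e ∈ (path u v i).edges

/-- `H` is a `≥k`-subdivision of the multigraph `G`. -/
def IsSubdivisionGE {V W : Type} (G : Multigraph V) (k : ℕ) (H : SimpleGraph W) : Prop :=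
  Nonempty (MultiSubdivision G H k)

/-- `H` is a subdivision of the simple graph `G` (every edge is replaced by a path
with at least one edge). -/
def IsSubdivision {V W : Type} (G : SimpleGraph V) (H : SimpleGraph W) : Prop :=
  IsSubdivisionGE G.toMultigraph 0 H

namespace Multigraph

/-- The underlying simple graph of a multigraph. -/
def support {V : Type} (G : Multigraph V) : SimpleGraph V where
  Adj u v := 0 < G.m u v
  symm := by
    constructor
    intro u v h
    show 0 < G.m v u
    rw [G.symm v u]
    exact h
  loopless := by
    constructor
    intro v h
    have h' : 0 < G.m v v := h
    rw [G.loopless v] at h'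
    exact Nat.lt_irrefl 0 h'

/-- A multigraph is connected if its underlying simple graph is. -/
def Connected {V : Type} (G : Multigraph V) : Prop :=
  G.support.Connected

/-- A multigraph is 2-connected if it is connected, has at least two vertices, and
deleting any single vertex leaves it connected. -/
def TwoConnected {V : Type} (G : Multigraph V) : Prop :=
  G.support.Connected ∧ (∃ u v : V, u ≠ v) ∧
    ∀ v : V, (G.support.induce {u : V | u ≠ v}).Connected

/-- `v` is a feedback vertex of the multigraph `G`: `G - v` contains no cycle
(where a pair of parallel edges forms a cycle of length 2). -/
def IsFeedbackVertex {V : Type} (G : Multigraph V) (v : V) : Prop :=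
  (G.support.induce {u : V | u ≠ v}).IsAcyclic ∧
    ∀ u w : V, u ≠ v → w ≠ v → G.m u w ≤ 1

end Multigraph

/-! ## Induced cycles and big vertices -/

/-- `C` induces a cycle in `G`. -/
def IsInducedCycle {V : Type} (G : SimpleGraph V) (C : Set V) : Prop :=
  IsCycleGraphOn (G.induce C)

/-- `v` is a big vertex of the (induced cycle on) `C` with respect to the frame
representation `F`: `v ∈ C` and `F v` contains the frame of every vertex of `C`
outside `N[v]`. -/
def IsBigVertexOf {V : Type} (G : SimpleGraph V) (F : V → Box) (C : Set V) (v : V) : Prop :=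
  v ∈ C ∧ ∀ u ∈ C, u ≠ v → ¬ G.Adj v u → Box.Inside (F u) (F v)

/-- `v` is a big vertex of the representation `F`: it is a big vertex of some
induced cycle of `G`. -/
def IsBigVertex {V : Type} (G : SimpleGraph V) (F : V → Box) (v : V) : Prop :=
  ∃ C : Set V, IsInducedCycle G C ∧ IsBigVertexOf G F C v

/-! ## Gluing a chandelier onto a vertex -/

/-- The graph obtained from the disjoint union of `G₁` and `G₂` by identifying the
vertex `v` of `G₁` with the vertex `p` of `G₂`. -/
def glueAt {V₁ V₂ : Type} (G₁ : SimpleGraph V₁) (G₂ : SimpleGraph V₂) (v : V₁) (p : V₂) :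
    SimpleGraph (V₁ ⊕ {x : V₂ // x ≠ p}) :=
  SimpleGraph.fromRel (fun a b =>
    match a, b with
    | Sum.inl u, Sum.inl w => G₁.Adj u w
    | Sum.inr u, Sum.inr w => G₂.Adj u.val w.val
    | Sum.inl u, Sum.inr w => u = v ∧ G₂.Adj p w.val
    | Sum.inr _, Sum.inl _ => False)

/-! ## The multigraphs `Ĥ₁` and `Ĥ₂` -/

/-- The multiplicity matrix of `Ĥ₁` (vertices `a₁ = 0`, `b₁ = 1`, `v₁ = 2`, `v₂ = 3`,
`a₂ = 4`, `b₂ = 5`). -/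
def H1hatMatrix : Matrix (Fin 6) (Fin 6) ℕ :=
  !![0, 2, 1, 0, 0, 0;
     2, 0, 1, 0, 0, 0;
     1, 1, 0, 1, 0, 0;
     0, 0, 1, 0, 1, 1;
     0, 0, 0, 1, 0, 2;
     0, 0, 0, 1, 2, 0]

/-- The multigraph `Ĥ₁`: two disjoint digons `a₁b₁`, `a₂b₂`, and single edges
`a₁v₁`, `b₁v₁`, `v₁v₂`, `a₂v₂`, `b₂v₂`. -/
def H1hat : Multigraph (Fin 6) where
  m u v := H1hatMatrix u v
  symm := by
    intro u v
    fin_cases u <;> fin_cases v <;> first | rfl | simp [H1hatMatrix, H2hatMatrix]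
  loopless := by
    intro v
    fin_cases v <;> first | rfl | simp [H1hatMatrix, H2hatMatrix]

/-- The multiplicity matrix of `Ĥ₂` (vertices `a₁ = 0`, `b₁ = 1`, `v = 2`,
`a₂ = 3`, `b₂ = 4`). -/
def H2hatMatrix : Matrix (Fin 5) (Fin 5) ℕ :=
  !![0, 2, 1, 0, 0;
     2, 0, 1, 0, 0;
     1, 1, 0, 1, 1;
     0, 0, 1, 0, 2;
     0, 0, 1, 2, 0]

/-- The multigraph `Ĥ₂`: two digons `a₁b₁`, `a₂b₂`, and single edges
`a₁v`, `b₁v`, `a₂v`, `b₂v`. -/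
def H2hat : Multigraph (Fin 5) where
  m u v := H2hatMatrix u v
  symm := by
    intro u v
    fin_cases u <;> fin_cases v <;> first | rfl | simp [H1hatMatrix, H2hatMatrix]
  loopless := by
    intro v
    fin_cases v <;> first | rfl | simp [H1hatMatrix, H2hatMatrix]

/-! ## Subdivisions of `K₄` and their type -/

/-- The complete graph on four vertices. -/
def K4 : SimpleGraph (Fin 4) := ⊤

/-- The set of edges of `K₄` that are subdivided at least once in the subdivision
witnessed by `S` (i.e. replaced by a path with at least two edges). -/
def subdividedEdges {W : Type} {H : SimpleGraph W}
    (S : MultiSubdivision K4.toMultigraph H 0) : Set (Sym2 (Fin 4)) :=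
  {e : Sym2 (Fin 4) | ∃ (u v : Fin 4) (i : Fin (K4.toMultigraph.m u v)),
    e = s(u, v) ∧ 2 ≤ (S.path u v i).length}

/-! ## Adding a twin -/

/-- The graph obtained from `G` by adding a twin of `v`: a new vertex, non-adjacent
to `v`, whose neighborhood is exactly `N(v)`. -/
def addTwin {V : Type} (G : SimpleGraph V) (v : V) : SimpleGraph (V ⊕ Unit) :=
  SimpleGraph.fromRel (fun a b =>
    match a, b with
    | Sum.inl u, Sum.inl w => G.Adj u w
    | Sum.inr _, Sum.inl u => G.Adj v u
    | _, _ => False)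

/-! ## The construction of Burling and Pawlik et al. -/

/-- A graph-stable set pair: a graph together with a collection of sets of vertices
(intended: stable sets). -/
structure GSPair : Type 1 where
  V : Type
  G : SimpleGraph V
  S : Set (Set V)

namespace GSPair

/-- The vertex type of `next P`: the original vertices, the vertices `(s, u)` of the
copy `H_s` of the graph for each `s ∈ 𝒮`, and the new vertices `v_{s,t}`. -/
abbrev nextVertex (P : GSPair) : Type :=
  P.V ⊕ ((↥P.S × P.V) ⊕ (↥P.S × ↥P.S))

/-- The adjacency generator for the graph of `next P`. -/
def nextRel (P : GSPair) : P.nextVertex → P.nextVertex → Prop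
  | Sum.inl u, Sum.inl v => P.G.Adj u v
  | Sum.inr (Sum.inl (s, u)), Sum.inr (Sum.inl (t, v)) => s = t ∧ P.G.Adj u v
  | Sum.inr (Sum.inr (s, t)), Sum.inr (Sum.inl (s', v)) => s = s' ∧ v ∈ (t : Set P.V)
  | _, _ => False

/-- The procedure `next`: add a disjoint copy `H_s` of the graph for each `s ∈ 𝒮`, a
vertex `v_{s,t}` whose neighborhood is exactly the copy of `t` inside `H_s` for all
`s, t ∈ 𝒮`, and take as new collection of stable sets all `s ∪ t_s` and
`s ∪ {v_{s,t}}`. -/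
def next (P : GSPair) : GSPair where
  V := P.nextVertex
  G := SimpleGraph.fromRel P.nextRel
  S := {A : Set P.nextVertex | ∃ s t : ↥P.S,
    A = (Sum.inl '' (s : Set P.V) : Set P.nextVertex) ∪
        ((fun u : P.V => (Sum.inr (Sum.inl (s, u)) : P.nextVertex)) '' (t : Set P.V)) ∨
    A = (Sum.inl '' (s : Set P.V) : Set P.nextVertex) ∪ {Sum.inr (Sum.inr (s, t))}}

/-- The starting pair: a single vertex, with the single stable set consisting of
that vertex. -/
def base : GSPair := ⟨PUnit, ⊥, {Set.univ}⟩

/-- `P` is an induced subgraph-stable set pair of `Q`. -/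
def IsInducedSubpair (P Q : GSPair) : Prop :=
  ∃ f : P.V ↪ Q.V, (∀ u v : P.V, P.G.Adj u v ↔ Q.G.Adj (f u) (f v)) ∧
    ∀ A ∈ P.S, ∃ B ∈ Q.S, A = f ⁻¹' B

/-- A graph-stable set pair is constructible if it is an induced subgraph-stable set
pair of some iterate of `next` on the starting pair. -/
def Constructible (P : GSPair) : Prop :=
  ∃ i : ℕ, IsInducedSubpair P (next^[i] base)

end GSPair

/-!
In a restricted representation two intersecting frames always meet in one way: the right
side of one of them enters the other through its bottom side and leaves through its top
side, and the rest of the first frame stays outside the second (`Box.StrictCross`).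
Conversely, such a crossing and disjointness are both compatible with conditions (1)–(3).

Give the twin of `v` the frame of `v` shrunk by an `ε` below half of every gap between
distinct coordinates of the representation. Shrinking preserves every crossing and creates
no new intersection, so the new frame meets exactly the frames met by the frame of `v`, in
the same way, and misses the frame of `v` itself. Condition (4) survives because a region
containing the shrunk frame contains the frame of `v` as well.
-/

open Topology in
lemma Set.Finite.exists_pos_forall_add_lt {S : Set ℝ} (hS : S.Finite) :
    ∃ ε > 0, ∀ a ∈ S, ∀ b ∈ S, a < b → a + ε < b := by
  have : ∀ᶠ ε in 𝓝[>] (0 : ℝ), ∀ a ∈ S, ∀ b ∈ S, a < b → a + ε < b := by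
    refine (Filter.eventually_all_finite hS).2 fun a _ => (Filter.eventually_all_finite hS).2
      fun b _ => ?_
    by_cases hab : a < b
    · filter_upwards [nhdsWithin_le_nhds (eventually_lt_nhds (sub_pos.2 hab))] with ε hε _
      linarith
    · exact .of_forall fun _ h => absurd h hab
  exact (this.and self_mem_nhdsWithin).exists.imp fun ε h => ⟨h.2, h.1⟩

lemma le_of_le_add_of_mem {S : Set ℝ} {ε a b : ℝ} (hε : 0 < ε)
    (hS : ∀ a ∈ S, ∀ b ∈ S, a < b → a + 2 * ε < b) (ha : a ∈ S) (hb : b ∈ S)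
    (h : a ≤ b + ε) : a ≤ b :=
  not_lt.1 fun hba => by linarith [hS b hb a ha hba]

namespace Box

/-- Conditions (1)–(3) of a representation, for the ordered pair of frames `A`, `C`. -/
structure Restricted (A C : Box) : Prop where
  corners_inter : A.corners ∩ C.frame = ∅
  leftSide_inter : A.leftSide ∩ C.frame = ∅
  rightSide_cross : (A.rightSide ∩ C.frame).Nonempty →
    (A.rightSide ∩ C.topSide).Nonempty ∧ (A.rightSide ∩ C.bottomSide).Nonempty

/-- The right side of `A` passes through `C` from below its bottom side to above its top
side, while the left side of `A` stays to the left of `C`. -/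
def StrictCross (A C : Box) : Prop :=
  A.x1 < C.x1 ∧ C.x1 < A.x2 ∧ A.x2 < C.x2 ∧ A.y1 < C.y1 ∧ C.y2 < A.y2

variable {A C : Box} {x y : ℝ} {p : ℝ × ℝ}

lemma mk_mem_frame : (x, y) ∈ A.frame ↔ (A.x1 ≤ x ∧ x ≤ A.x2 ∧ A.y1 ≤ y ∧ y ≤ A.y2) ∧
    (x = A.x1 ∨ x = A.x2 ∨ y = A.y1 ∨ y = A.y2) :=
  Iff.rfl

lemma mk_mem_leftSide : (x, y) ∈ A.leftSide ↔ x = A.x1 ∧ A.y1 ≤ y ∧ y ≤ A.y2 := Iff.rfl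

lemma mk_mem_rightSide : (x, y) ∈ A.rightSide ↔ x = A.x2 ∧ A.y1 ≤ y ∧ y ≤ A.y2 := Iff.rfl

lemma mk_mem_topSide : (x, y) ∈ A.topSide ↔ y = A.y2 ∧ A.x1 ≤ x ∧ x ≤ A.x2 := Iff.rfl

lemma mk_mem_bottomSide : (x, y) ∈ A.bottomSide ↔ y = A.y1 ∧ A.x1 ≤ x ∧ x ≤ A.x2 := Iff.rfl

lemma mk_mem_corners : (x, y) ∈ A.corners ↔
    (x = A.x1 ∨ x = A.x2) ∧ (y = A.y1 ∨ y = A.y2) := by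
  simp only [corners, Set.mem_insert_iff, Set.mem_singleton_iff, Prod.mk.injEq]
  tauto

lemma corners_subset_frame : A.corners ⊆ A.frame := by
  rintro ⟨x, y⟩ h
  rw [mk_mem_corners] at h
  have := A.hx; have := A.hy
  obtain ⟨hx | hx, hy | hy⟩ := h <;> subst hx hy <;> simp [mk_mem_frame, le_of_lt, *]

lemma leftSide_subset_frame : A.leftSide ⊆ A.frame :=
  fun ⟨_, _⟩ ⟨hx, hy⟩ => ⟨⟨hx.ge, hx ▸ A.hx.le, hy⟩, Or.inl hx⟩

lemma rightSide_subset_frame : A.rightSide ⊆ A.frame :=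
  fun ⟨_, _⟩ ⟨hx, hy⟩ => ⟨⟨hx ▸ A.hx.le, hx.le, hy⟩, Or.inr (Or.inl hx)⟩

namespace Restricted

lemma of_frame_inter_eq_empty (h : A.frame ∩ C.frame = ∅) : A.Restricted C where
  corners_inter := Set.subset_eq_empty (Set.inter_subset_inter_left _ corners_subset_frame) h
  leftSide_inter := Set.subset_eq_empty (Set.inter_subset_inter_left _ leftSide_subset_frame) h
  rightSide_cross hr := (Set.not_nonempty_empty
    (h ▸ hr.mono (Set.inter_subset_inter_left _ rightSide_subset_frame))).elim

lemma corner_notMem (h : A.Restricted C) (hp : p ∈ A.corners) : p ∉ C.frame :=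
  fun hC => (Set.eq_empty_iff_forall_notMem.1 h.corners_inter) p ⟨hp, hC⟩

lemma leftSide_notMem (h : A.Restricted C) (hp : p ∈ A.leftSide) : p ∉ C.frame :=
  fun hC => (Set.eq_empty_iff_forall_notMem.1 h.leftSide_inter) p ⟨hp, hC⟩

end Restricted

namespace StrictCross

lemma frame_inter_nonempty (h : StrictCross A C) : (A.frame ∩ C.frame).Nonempty := by
  obtain ⟨h1, h2, h3, h4, h5⟩ := h
  exact ⟨(A.x2, C.y2), ⟨⟨by linarith, le_rfl, by linarith [C.hy], by linarith⟩, by simp⟩,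
    ⟨⟨by linarith, by linarith, C.hy.le, le_rfl⟩, by simp⟩⟩

lemma restricted (h : StrictCross A C) : A.Restricted C := by
  obtain ⟨h1, h2, h3, h4, h5⟩ := h
  have := A.hx; have := A.hy; have := C.hx; have := C.hy
  refine ⟨?_, ?_, fun _ => ⟨⟨(A.x2, C.y2), ⟨rfl, by linarith, by linarith⟩, ⟨rfl, by linarith,
    by linarith⟩⟩, ⟨(A.x2, C.y1), ⟨rfl, by linarith, by linarith⟩, ⟨rfl, by linarith, by linarith⟩⟩⟩⟩
  · refine Set.eq_empty_of_forall_notMem fun ⟨x, y⟩ ⟨hA, hC⟩ => ?_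
    rw [mk_mem_corners] at hA
    rw [mk_mem_frame] at hC
    obtain ⟨-, hy | hy⟩ := hA <;> linarith [hC.1.2.2.1, hC.1.2.2.2]
  · refine Set.eq_empty_of_forall_notMem fun ⟨x, y⟩ ⟨hA, hC⟩ => ?_
    rw [mk_mem_leftSide] at hA
    rw [mk_mem_frame] at hC
    linarith [hA.1, hC.1.1]

lemma restricted_symm (h : StrictCross A C) : C.Restricted A := by
  obtain ⟨h1, h2, h3, h4, h5⟩ := h
  have := C.hx; have := C.hy
  refine ⟨?_, ?_, ?_⟩
  · refine Set.eq_empty_of_forall_notMem fun ⟨x, y⟩ ⟨hC, hA⟩ => ?_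
    rw [mk_mem_corners] at hC
    rw [mk_mem_frame] at hA
    obtain ⟨hx | hx, hy | hy⟩ := hC <;> obtain ⟨-, h | h | h | h⟩ := hA <;> linarith
  · refine Set.eq_empty_of_forall_notMem fun ⟨x, y⟩ ⟨hC, hA⟩ => ?_
    rw [mk_mem_leftSide] at hC
    rw [mk_mem_frame] at hA
    obtain ⟨-, h | h | h | h⟩ := hA <;> linarith
  · rintro ⟨⟨x, y⟩, hC, hA⟩
    rw [mk_mem_rightSide] at hC
    rw [mk_mem_frame] at hA
    linarith [hA.1.2.1]

end StrictCross

lemma strictCross_of_rightSide_inter (hAC : A.Restricted C) (hCA : C.Restricted A)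
    (h : (A.rightSide ∩ C.frame).Nonempty) : StrictCross A C := by
  obtain ⟨⟨⟨_, _⟩, ht, htC⟩, ⟨⟨_, _⟩, hb, hbC⟩⟩ := hAC.rightSide_cross h
  rw [mk_mem_rightSide] at ht hb
  rw [mk_mem_topSide] at htC
  rw [mk_mem_bottomSide] at hbC
  obtain ⟨rfl, -, hCA2⟩ := ht
  obtain ⟨rfl, hAC1, -⟩ := hb
  obtain ⟨rfl, hCx1, hCx2⟩ := htC
  obtain ⟨rfl, -, -⟩ := hbC
  have := A.hx; have := A.hy; have := C.hx; have := C.hy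
  refine ⟨?_, hCx1.lt_of_ne ?_, hCx2.lt_of_ne ?_, hAC1.lt_of_ne ?_, hCA2.lt_of_ne ?_⟩
  · by_contra! hle
    exact hAC.leftSide_notMem (p := (A.x1, C.y1)) ⟨rfl, by linarith, by linarith⟩
      ⟨⟨hle, by linarith, le_rfl, by linarith⟩, Or.inr (Or.inr (Or.inl rfl))⟩
  · intro he
    exact hCA.corner_notMem (p := (C.x1, C.y2)) (mk_mem_corners.2 ⟨Or.inl rfl, Or.inr rfl⟩)
      ⟨⟨by linarith, by linarith, by linarith, hCA2⟩, Or.inr (Or.inl he)⟩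
  · intro he
    exact hCA.corner_notMem (p := (C.x2, C.y2)) (mk_mem_corners.2 ⟨Or.inr rfl, Or.inr rfl⟩)
      ⟨⟨by linarith, by linarith, by linarith, hCA2⟩, Or.inr (Or.inl he.symm)⟩
  · intro he
    exact hAC.corner_notMem (p := (A.x2, A.y1)) (mk_mem_corners.2 ⟨Or.inr rfl, Or.inl rfl⟩)
      ⟨⟨hCx1, hCx2, he.ge, by linarith⟩, Or.inr (Or.inr (Or.inl he))⟩
  · intro he
    exact hAC.corner_notMem (p := (A.x2, A.y2)) (mk_mem_corners.2 ⟨Or.inr rfl, Or.inr rfl⟩)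
      ⟨⟨hCx1, hCx2, by linarith, he.ge⟩, Or.inr (Or.inr (Or.inr he.symm))⟩

lemma not_horizontal_overlap (hAC : A.Restricted C) (hCA : C.Restricted A)
    (hA : (x, y) ∈ A.frame) (hC : (x, y) ∈ C.frame) (hyA : y = A.y1 ∨ y = A.y2)
    (hyC : y = C.y1 ∨ y = C.y2) : False := by
  obtain ⟨⟨hA1, hA2, hA3, hA4⟩, -⟩ := hA
  obtain ⟨⟨hC1, hC2, hC3, hC4⟩, -⟩ := hC
  rcases le_total A.x1 C.x1 with hle | hle
  · exact hCA.corner_notMem (p := (C.x1, y)) (mk_mem_corners.2 ⟨Or.inl rfl, hyC⟩)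
      ⟨⟨hle, by linarith, hA3, hA4⟩, Or.inr (Or.inr hyA)⟩
  · exact hAC.corner_notMem (p := (A.x1, y)) (mk_mem_corners.2 ⟨Or.inl rfl, hyA⟩)
      ⟨⟨hle, by linarith, hC3, hC4⟩, Or.inr (Or.inr hyC)⟩

lemma strictCross_or_strictCross (hAC : A.Restricted C) (hCA : C.Restricted A)
    (h : (A.frame ∩ C.frame).Nonempty) : StrictCross A C ∨ StrictCross C A := by
  obtain ⟨⟨x, y⟩, hA, hC⟩ := h
  obtain ⟨⟨-, -, hA3, hA4⟩, hxA | hxA | hyA⟩ := id hA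
  · exact (hAC.leftSide_notMem ⟨hxA, hA3, hA4⟩ hC).elim
  · exact .inl (strictCross_of_rightSide_inter hAC hCA ⟨_, ⟨hxA, hA3, hA4⟩, hC⟩)
  obtain ⟨⟨-, -, hC3, hC4⟩, hxC | hxC | hyC⟩ := id hC
  · exact (hCA.leftSide_notMem ⟨hxC, hC3, hC4⟩ hA).elim
  · exact .inr (strictCross_of_rightSide_inter hCA hAC ⟨_, ⟨hxC, hC3, hC4⟩, hA⟩)
  · exact (not_horizontal_overlap hAC hCA hA hC hyA hyC).elim

theorem restricted_and_restricted_iff : A.Restricted C ∧ C.Restricted A ↔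
    A.frame ∩ C.frame = ∅ ∨ StrictCross A C ∨ StrictCross C A := by
  refine ⟨fun ⟨hAC, hCA⟩ => ?_, ?_⟩
  · rcases (A.frame ∩ C.frame).eq_empty_or_nonempty with h | h
    · exact .inl h
    · exact .inr (strictCross_or_strictCross hAC hCA h)
  · rintro (h | h | h)
    · exact ⟨.of_frame_inter_eq_empty h, .of_frame_inter_eq_empty (Set.inter_comm _ _ ▸ h)⟩
    · exact ⟨h.restricted, h.restricted_symm⟩
    · exact ⟨h.restricted_symm, h.restricted⟩

lemma not_frame_subset_region (hAC : A.Restricted C) (hCA : C.Restricted A)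
    (h : (A.frame ∩ C.frame).Nonempty) : ¬ A.frame ⊆ C.region := by
  intro hsub
  have := A.hx; have := A.hy
  rcases strictCross_or_strictCross hAC hCA h with ⟨h1, -⟩ | ⟨-, -, h3, -⟩
  · exact absurd (hsub (a := (A.x1, A.y1)) ⟨⟨le_rfl, A.hx.le, le_rfl, A.hy.le⟩, Or.inl rfl⟩).1
      (not_le.2 h1)
  · exact absurd (hsub (a := (A.x2, A.y1)) ⟨⟨A.hx.le, le_rfl, le_rfl, A.hy.le⟩,
      Or.inr (Or.inl rfl)⟩).2.1 (not_le.2 h3)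

def CoordsIn (B : Box) (S : Set ℝ) : Prop :=
  B.x1 ∈ S ∧ B.x2 ∈ S ∧ B.y1 ∈ S ∧ B.y2 ∈ S

def inset (B : Box) (ε : ℝ) (hx : B.x1 + ε < B.x2 - ε) (hy : B.y1 + ε < B.y2 - ε) : Box :=
  ⟨B.x1 + ε, B.x2 - ε, B.y1 + ε, B.y2 - ε, hx, hy⟩

section Inset

variable {S : Set ℝ} {ε : ℝ} {A X : Box} {hx : A.x1 + ε < A.x2 - ε} {hy : A.y1 + ε < A.y2 - ε}

lemma inset_frame_inter_frame (hε : 0 < ε) : (A.inset ε hx hy).frame ∩ A.frame = ∅ := by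
  refine Set.eq_empty_of_forall_notMem ?_
  rintro p ⟨⟨⟨h1, h2, h3, h4⟩, -⟩, -, h | h | h | h⟩ <;>
    simp only [inset] at h1 h2 h3 h4 <;> linarith

lemma inset_region_subset (hε : 0 ≤ ε) : (A.inset ε hx hy).region ⊆ A.region := by
  rintro p ⟨h1, h2, h3, h4⟩
  simp only [inset] at h1 h2 h3 h4
  exact ⟨by linarith, by linarith, by linarith, by linarith⟩

lemma not_frame_subset_inset_region (hε : 0 < ε) : ¬ A.frame ⊆ (A.inset ε hx hy).region :=
  fun h => by
    have := (h (a := (A.x1, A.y1)) ⟨⟨le_rfl, A.hx.le, le_rfl, A.hy.le⟩, Or.inl rfl⟩).1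
    simp only [inset] at this
    linarith

lemma frame_subset_region_of_inset (hε : 0 < ε)
    (hS : ∀ a ∈ S, ∀ b ∈ S, a < b → a + 2 * ε < b) (hA : A.CoordsIn S) (hX : X.CoordsIn S)
    (h : (A.inset ε hx hy).frame ⊆ X.region) : A.frame ⊆ X.region := by
  obtain ⟨a1, a2, a3, a4⟩ := hA
  obtain ⟨b1, b2, b3, b4⟩ := hX
  have h1 := h (a := (A.x1 + ε, A.y1 + ε)) ⟨⟨le_rfl, hx.le, le_rfl, hy.le⟩, Or.inl rfl⟩
  have h2 := h (a := (A.x2 - ε, A.y2 - ε)) ⟨⟨hx.le, le_rfl, hy.le, le_rfl⟩, Or.inr (Or.inl rfl)⟩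
  have k1 := le_of_le_add_of_mem hε hS b1 a1 h1.1
  have k2 := le_of_le_add_of_mem hε hS a2 b2 (by linarith [h2.2.1])
  have k3 := le_of_le_add_of_mem hε hS b3 a3 h1.2.2.1
  have k4 := le_of_le_add_of_mem hε hS a4 b4 (by linarith [h2.2.2.2])
  rintro p ⟨⟨m1, m2, m3, m4⟩, -⟩
  exact ⟨by linarith, by linarith, by linarith, by linarith⟩

lemma StrictCross.inset_left (hε : 0 < ε) (hS : ∀ a ∈ S, ∀ b ∈ S, a < b → a + 2 * ε < b)
    (hA : A.CoordsIn S) (hX : X.CoordsIn S) (h : StrictCross A X) :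
    StrictCross (A.inset ε hx hy) X := by
  obtain ⟨a1, a2, a3, a4⟩ := hA
  obtain ⟨b1, b2, b3, b4⟩ := hX
  obtain ⟨h1, h2, h3, h4, h5⟩ := h
  have := hS _ a1 _ b1 h1; have := hS _ b1 _ a2 h2
  have := hS _ a3 _ b3 h4; have := hS _ b4 _ a4 h5
  simp only [StrictCross, inset]
  refine ⟨?_, ?_, ?_, ?_, ?_⟩ <;> linarith

lemma StrictCross.inset_right (hε : 0 < ε) (hS : ∀ a ∈ S, ∀ b ∈ S, a < b → a + 2 * ε < b)
    (hA : A.CoordsIn S) (hX : X.CoordsIn S) (h : StrictCross X A) :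
    StrictCross X (A.inset ε hx hy) := by
  obtain ⟨a1, a2, a3, a4⟩ := hA
  obtain ⟨b1, b2, b3, b4⟩ := hX
  obtain ⟨h1, h2, h3, h4, h5⟩ := h
  have := hS _ b1 _ a1 h1; have := hS _ a1 _ b2 h2
  have := hS _ b2 _ a2 h3; have := hS _ b3 _ a3 h4; have := hS _ a4 _ b4 h5
  simp only [StrictCross, inset]
  refine ⟨?_, ?_, ?_, ?_, ?_⟩ <;> linarith

lemma frame_inter_nonempty_of_inset (hε : 0 < ε)
    (hS : ∀ a ∈ S, ∀ b ∈ S, a < b → a + 2 * ε < b) (hA : A.CoordsIn S) (hX : X.CoordsIn S)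
    (h : ((A.inset ε hx hy).frame ∩ X.frame).Nonempty) : (A.frame ∩ X.frame).Nonempty := by
  obtain ⟨a1, a2, a3, a4⟩ := hA
  obtain ⟨b1, b2, b3, b4⟩ := hX
  obtain ⟨⟨x, y⟩, ⟨⟨h1, h2, h3, h4⟩, hA'⟩, ⟨⟨k1, k2, k3, k4⟩, hX'⟩⟩ := h
  simp only [inset] at h1 h2 h3 h4 hA' k1 k2 k3 k4 hX'
  have gap := fun {a b : ℝ} => @le_of_le_add_of_mem S ε a b hε hS
  -- the coordinate of `(x, y)` lying in `S` is not a coordinate of the inset box, so `(x, y)`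
  -- slides along a side of `X` onto a side of `A`
  rcases or_assoc.2 hX' with hxX | hyX
  · have hxS : x ∈ S := by rcases hxX with e | e <;> rw [e] <;> assumption
    have hyA : y = A.y1 + ε ∨ y = A.y2 - ε := by
      rcases hA' with e | e | e
      · linarith [gap hxS a1 (by linarith)]
      · linarith [gap a2 hxS (by linarith)]
      · exact e
    rcases hyA with e | e
    · exact ⟨(x, A.y1), ⟨⟨by linarith, by linarith, le_rfl, A.hy.le⟩, Or.inr (Or.inr (Or.inl rfl))⟩,
        ⟨⟨k1, k2, gap b3 a3 (by linarith), by linarith⟩, or_assoc.1 (Or.inl hxX)⟩⟩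
    · exact ⟨(x, A.y2), ⟨⟨by linarith, by linarith, A.hy.le, le_rfl⟩, Or.inr (Or.inr (Or.inr rfl))⟩,
        ⟨⟨k1, k2, by linarith, gap a4 b4 (by linarith)⟩, or_assoc.1 (Or.inl hxX)⟩⟩
  · have hyS : y ∈ S := by rcases hyX with e | e <;> rw [e] <;> assumption
    have hxA : x = A.x1 + ε ∨ x = A.x2 - ε := by
      rcases hA' with e | e | e | e
      · exact .inl e
      · exact .inr e
      · linarith [gap hyS a3 (by linarith)]
      · linarith [gap a4 hyS (by linarith)]
    rcases hxA with e | e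
    · exact ⟨(A.x1, y), ⟨⟨le_rfl, A.hx.le, by linarith, by linarith⟩, Or.inl rfl⟩,
        ⟨⟨gap b1 a1 (by linarith), by linarith, k3, k4⟩, Or.inr (Or.inr hyX)⟩⟩
    · exact ⟨(A.x2, y), ⟨⟨A.hx.le, le_rfl, by linarith, by linarith⟩, Or.inr (Or.inl rfl)⟩,
        ⟨⟨by linarith, gap a2 b2 (by linarith), k3, k4⟩, Or.inr (Or.inr hyX)⟩⟩

lemma restricted_and_restricted_inset (hε : 0 < ε)
    (hS : ∀ a ∈ S, ∀ b ∈ S, a < b → a + 2 * ε < b) (hA : A.CoordsIn S) (hX : X.CoordsIn S)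
    (hAX : A.Restricted X) (hXA : X.Restricted A) :
    (A.inset ε hx hy).Restricted X ∧ X.Restricted (A.inset ε hx hy) := by
  refine restricted_and_restricted_iff.2 ?_
  rcases restricted_and_restricted_iff.1 ⟨hAX, hXA⟩ with h | h | h
  · refine .inl (Set.not_nonempty_iff_eq_empty.1 fun h' => ?_)
    exact Set.not_nonempty_iff_eq_empty.2 h (frame_inter_nonempty_of_inset hε hS hA hX h')
  · exact .inr (.inl (h.inset_left hε hS hA hX))
  · exact .inr (.inr (h.inset_right hε hS hA hX))

lemma inset_frame_inter_nonempty_iff (hε : 0 < ε)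
    (hS : ∀ a ∈ S, ∀ b ∈ S, a < b → a + 2 * ε < b) (hA : A.CoordsIn S) (hX : X.CoordsIn S)
    (hAX : A.Restricted X) (hXA : X.Restricted A) :
    ((A.inset ε hx hy).frame ∩ X.frame).Nonempty ↔ (A.frame ∩ X.frame).Nonempty := by
  refine ⟨frame_inter_nonempty_of_inset hε hS hA hX, fun h => ?_⟩
  rcases strictCross_or_strictCross hAX hXA h with h | h
  · exact (h.inset_left hε hS hA hX).frame_inter_nonempty
  · rw [Set.inter_comm]
    exact (h.inset_right hε hS hA hX).frame_inter_nonempty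

end Inset

end Box

open Box

section Twin

variable {V : Type} {G : SimpleGraph V} {F : V → Box}

namespace IsFrameRepresentation

lemma restricted (hF : IsFrameRepresentation G F) {u w : V} (h : u ≠ w) :
    (F u).Restricted (F w) :=
  ⟨hF.corner_free u w h, hF.left_free u w h, hF.right_cross u w h⟩

lemma of_restricted (adj_iff : ∀ u w, u ≠ w → (G.Adj u w ↔ ((F u).frame ∩ (F w).frame).Nonempty))
    (restricted : ∀ u w, u ≠ w → (F u).Restricted (F w))
    (not_nested : ∀ u v w : V, u ≠ v → w ≠ u → w ≠ v →
      ((F u).frame ∩ (F v).frame).Nonempty → ¬ ((F w).frame ⊆ (F u).region ∩ (F v).region)) :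
    IsFrameRepresentation G F where
  adj_iff := adj_iff
  corner_free u w h := (restricted u w h).corners_inter
  left_free u w h := (restricted u w h).leftSide_inter
  right_cross u w h := (restricted u w h).rightSide_cross
  not_nested := not_nested

end IsFrameRepresentation

section AddTwin

variable {v u w : V} {t : Unit}

@[simp] lemma addTwin_adj_inl_inl : (addTwin G v).Adj (.inl u) (.inl w) ↔ G.Adj u w := by
  simp only [addTwin, SimpleGraph.fromRel_adj, ne_eq, Sum.inl.injEq]
  exact ⟨fun ⟨_, h⟩ => h.elim id G.adj_symm, fun h => ⟨G.ne_of_adj h, .inl h⟩⟩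

@[simp] lemma addTwin_adj_inl_inr : (addTwin G v).Adj (.inl u) (.inr t) ↔ G.Adj v u := by
  simp [addTwin]

@[simp] lemma addTwin_adj_inr_inl : (addTwin G v).Adj (.inr t) (.inl u) ↔ G.Adj v u := by
  simp [addTwin]

end AddTwin

structure IsTwinFrame (F : V → Box) (v : V) (B : Box) : Prop where
  frame_inter_frame : B.frame ∩ (F v).frame = ∅
  region_subset : B.region ⊆ (F v).region
  not_frame_subset : ¬ (F v).frame ⊆ B.region
  restricted : ∀ u, u ≠ v → B.Restricted (F u) ∧ (F u).Restricted B
  frame_inter_nonempty_iff : ∀ u, u ≠ v →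
    ((B.frame ∩ (F u).frame).Nonempty ↔ ((F v).frame ∩ (F u).frame).Nonempty)
  frame_subset_region : ∀ u, B.frame ⊆ (F u).region → (F v).frame ⊆ (F u).region

namespace IsFrameRepresentation

variable {v : V} {B : Box}

lemma twin_adj_iff (hF : IsFrameRepresentation G F) (hB : IsTwinFrame F v B) (u : V) :
    G.Adj v u ↔ ((F u).frame ∩ B.frame).Nonempty := by
  rw [Set.inter_comm]
  by_cases huv : u = v
  · subst huv
    simp [hB.frame_inter_frame]
  · exact (hF.adj_iff v u (Ne.symm huv)).trans (hB.frame_inter_nonempty_iff u huv).symm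

lemma twin_not_nested (hF : IsFrameRepresentation G F) (hB : IsTwinFrame F v B) {w x : V}
    (hxw : x ≠ w) (h : (B.frame ∩ (F w).frame).Nonempty) :
    ¬ (F x).frame ⊆ B.region ∩ (F w).region := by
  have hwv : w ≠ v := by
    rintro rfl
    exact Set.not_nonempty_iff_eq_empty.2 hB.frame_inter_frame h
  intro hsub
  by_cases hxv : x = v
  · subst hxv
    exact hB.not_frame_subset fun _ hp => (hsub hp).1
  · exact hF.not_nested v w x hwv.symm hxv hxw ((hB.frame_inter_nonempty_iff w hwv).1 h)
      fun _ hp => ⟨hB.region_subset (hsub hp).1, (hsub hp).2⟩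

lemma not_nested_twin (hF : IsFrameRepresentation G F) (hB : IsTwinFrame F v B) {u w : V}
    (huw : u ≠ w) (h : ((F u).frame ∩ (F w).frame).Nonempty) :
    ¬ B.frame ⊆ (F u).region ∩ (F w).region := by
  intro hsub
  have hu := hB.frame_subset_region u fun _ hp => (hsub hp).1
  have hw := hB.frame_subset_region w fun _ hp => (hsub hp).2
  by_cases hvu : v = u
  · subst hvu
    exact not_frame_subset_region (hF.restricted huw) (hF.restricted huw.symm) h hw
  by_cases hvw : v = w
  · subst hvw
    exact not_frame_subset_region (hF.restricted huw.symm) (hF.restricted huw)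
      (Set.inter_comm _ _ ▸ h) hu
  exact hF.not_nested u w v huw hvu hvw h fun _ hp => ⟨hu hp, hw hp⟩

theorem addTwin (hF : IsFrameRepresentation G F) (hB : IsTwinFrame F v B) :
    IsFrameRepresentation (addTwin G v) (Sum.elim F fun _ => B) := by
  refine .of_restricted ?_ ?_ ?_
  · rintro (u | ⟨⟩) (w | ⟨⟩) hne
    · exact (addTwin_adj_inl_inl).trans (hF.adj_iff u w (hne ∘ congrArg _))
    · exact addTwin_adj_inl_inr.trans (hF.twin_adj_iff hB u)
    · rw [Sum.elim_inr, Sum.elim_inl, Set.inter_comm]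
      exact addTwin_adj_inr_inl.trans (hF.twin_adj_iff hB w)
    · exact absurd rfl hne
  · rintro (u | ⟨⟩) (w | ⟨⟩) hne
    · exact hF.restricted (hne ∘ congrArg _)
    · by_cases huv : u = v
      · subst huv
        exact .of_frame_inter_eq_empty (Set.inter_comm _ _ ▸ hB.frame_inter_frame)
      · exact (hB.restricted u huv).2
    · by_cases hwv : w = v
      · subst hwv
        exact .of_frame_inter_eq_empty hB.frame_inter_frame
      · exact (hB.restricted w hwv).1
    · exact absurd rfl hne
  · rintro (u | ⟨⟩) (w | ⟨⟩) (x | ⟨⟩) hab hca hcb h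
    · exact hF.not_nested u w x (hab ∘ congrArg _) (hca ∘ congrArg _) (hcb ∘ congrArg _) h
    · exact hF.not_nested_twin hB (hab ∘ congrArg _) h
    · rw [Set.inter_comm]
      exact hF.twin_not_nested hB (hca ∘ congrArg _) (Set.inter_comm _ _ ▸ h)
    · exact absurd rfl hcb
    · exact hF.twin_not_nested hB (hcb ∘ congrArg _) h
    · exact absurd rfl hca
    all_goals exact absurd rfl hab

lemma isTwinFrame_inset (hF : IsFrameRepresentation G F) {S : Set ℝ} {ε : ℝ} (hε : 0 < ε) (hS : ∀ a ∈ S, ∀ b ∈ S, a < b → a + 2 * ε < b)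
    (hSF : ∀ u, (F u).CoordsIn S) (hx : (F v).x1 + ε < (F v).x2 - ε)
    (hy : (F v).y1 + ε < (F v).y2 - ε) : IsTwinFrame F v ((F v).inset ε hx hy) where
  frame_inter_frame := inset_frame_inter_frame hε
  region_subset := inset_region_subset hε.le
  not_frame_subset := not_frame_subset_inset_region hε
  restricted u huv := restricted_and_restricted_inset hε hS (hSF v) (hSF u)
    (hF.restricted (Ne.symm huv)) (hF.restricted huv)
  frame_inter_nonempty_iff u huv := inset_frame_inter_nonempty_iff hε hS (hSF v) (hSF u)
    (hF.restricted (Ne.symm huv)) (hF.restricted huv)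
  frame_subset_region u := frame_subset_region_of_inset hε hS (hSF v) (hSF u)

end IsFrameRepresentation

end Twin

/-- If a graph `G` has a restricted frame representation and `v`
is a vertex of `G`, then the graph obtained from `G` by adding a twin of `v` is
also a restricted frame graph. -/
theorem addTwin_isRestrictedFrameGraph
    {V : Type} [Fintype V] (G : SimpleGraph V) (v : V)
    (h : IsRestrictedFrameGraph G) :
    IsRestrictedFrameGraph (addTwin G v) := by
  obtain ⟨F, hF⟩ := h
  set S : Set ℝ := ⋃ u, {(F u).x1, (F u).x2, (F u).y1, (F u).y2}
  have hSF : ∀ u, (F u).CoordsIn S := fun u => by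
    simp only [CoordsIn, S, Set.mem_iUnion]
    exact ⟨⟨u, by simp⟩, ⟨u, by simp⟩, ⟨u, by simp⟩, ⟨u, by simp⟩⟩
  have hfin : S.Finite := Set.finite_iUnion fun _ => Set.toFinite _
  obtain ⟨δ, hδ, hS⟩ := hfin.exists_pos_forall_add_lt
  have hS' : ∀ a ∈ S, ∀ b ∈ S, a < b → a + 2 * (δ / 2) < b := fun a ha b hb hab => by
    linarith [hS a ha b hb hab]
  have hx : (F v).x1 + δ / 2 < (F v).x2 - δ / 2 := by
    linarith [hS _ (hSF v).1 _ (hSF v).2.1 (F v).hx]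
  have hy : (F v).y1 + δ / 2 < (F v).y2 - δ / 2 := by
    linarith [hS _ (hSF v).2.2.1 _ (hSF v).2.2.2 (F v).hy]
  exact ⟨_, hF.addTwin (hF.isTwinFrame_inset (half_pos hδ) hS' hSF hx hy)⟩
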